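/- For every n ≥ 1 and all X ∈ ℝ, T_n(X) = 1/2 + (1/2) ∫_0^X S_{n−1}(t) dt. -/

import Mathlib

/-!
Integrating the binomial expansion term by term and using Pascal's rule gives
`∫₀ˣ L_k = L_k(X) - L_{k+1}(X)`. Hence `∫₀ˣ S_{n-1}` is the alternating sum of the differences
`L_k(X) - L_{k+1}(X)`, `k < n`, and so is `2 T_n(X) - 1`, since `T_0 = 1/2` and passing from `T_k`
to `T_{k+1}` adds `(-1)^k (L_k - L_{k+1}) / 2`.
-/

open MeasureTheory

noncomputable section

/-- The `n`-th Laguerre polynomial `L_n(x) = Σ_{k=0}^n (n choose k) (−x)^k / k!`. -/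
def laguerreFun (n : ℕ) (x : ℝ) : ℝ :=
  ∑ k ∈ Finset.range (n + 1), (n.choose k : ℝ) * (-x) ^ k / (k.factorial : ℝ)

/-- `T_n(X) = Σ_{k=0}^{n−1} (−1)^k L_k(X) + ((−1)^n/2) L_n(X)`. -/
def Tfun (n : ℕ) (X : ℝ) : ℝ :=
  (∑ k ∈ Finset.range n, (-1 : ℝ) ^ k * laguerreFun k X) +
    (-1 : ℝ) ^ n / 2 * laguerreFun n X

/-- `V_α(X) = 4 e^{−X/2} Σ_{k=0}^{d−1} C(d−1,k) T_{|α|+k}(X)`. -/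
def Vfun (d : ℕ) (α : Fin d → ℕ) (X : ℝ) : ℝ :=
  4 * Real.exp (-X / 2) *
    ∑ k ∈ Finset.range d, ((d - 1).choose k : ℝ) * Tfun ((∑ j, α j) + k) X

/-- `S_n(X) = Σ_{k=0}^{n} (−1)^k L_k(X)`. -/
def Sfun (n : ℕ) (X : ℝ) : ℝ :=
  ∑ k ∈ Finset.range (n + 1), (-1 : ℝ) ^ k * laguerreFun k X

lemma continuous_laguerreFun (n : ℕ) : Continuous (laguerreFun n) :=
  continuous_finsetSum _ fun _ _ => by fun_prop

@[simp]
lemma laguerreFun_zero_left (x : ℝ) : laguerreFun 0 x = 1 := by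
  simp [laguerreFun]

@[simp]
lemma laguerreFun_zero_right (n : ℕ) : laguerreFun n 0 = 1 := by
  rw [laguerreFun, Finset.sum_eq_single 0 (fun k _ hk => by simp [zero_pow hk]) (by simp)]
  simp

lemma laguerreFun_succ_sub (n : ℕ) (x : ℝ) :
    laguerreFun (n + 1) x - laguerreFun n x =
      ∑ k ∈ Finset.range (n + 1), (n.choose k : ℝ) * (-x) ^ (k + 1) / ((k + 1).factorial : ℝ) := by
  have hL : laguerreFun n x = 1 +
      ∑ k ∈ Finset.range (n + 1), (n.choose (k + 1) : ℝ) * (-x) ^ (k + 1) / ((k + 1).factorial : ℝ) := by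
    rw [Finset.sum_range_succ, Nat.choose_succ_self, laguerreFun, Finset.sum_range_succ']
    simp [add_comm]
  rw [hL, laguerreFun, Finset.sum_range_succ']
  simp only [Nat.choose_succ_succ, Nat.cast_add, add_mul, add_div, Finset.sum_add_distrib]
  simp only [Nat.choose_zero_right, Nat.cast_one, pow_zero, Nat.factorial_zero, div_one, mul_one]
  ring

lemma hasDerivAt_neg_pow_succ_div_factorial (k : ℕ) (x : ℝ) :
    HasDerivAt (fun y : ℝ => -((-y) ^ (k + 1) / ((k + 1).factorial : ℝ)))
      ((-x) ^ k / (k.factorial : ℝ)) x := by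
  refine (((hasDerivAt_neg x).pow (k + 1)).div_const ((k + 1).factorial : ℝ)).neg.congr_deriv ?_
  have hk : (k.factorial : ℝ) ≠ 0 := by positivity
  rw [Nat.factorial_succ]
  push_cast
  field_simp

lemma hasDerivAt_laguerreFun_sub_succ (n : ℕ) (x : ℝ) :
    HasDerivAt (fun y => laguerreFun n y - laguerreFun (n + 1) y) (laguerreFun n x) x := by
  have hsum := HasDerivAt.fun_sum (u := Finset.range (n + 1))
    fun k _ => (hasDerivAt_neg_pow_succ_div_factorial k x).const_mul (n.choose k : ℝ)
  have hfun : (fun y => laguerreFun n y - laguerreFun (n + 1) y) = fun y =>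
      ∑ k ∈ Finset.range (n + 1), (n.choose k : ℝ) * -((-y) ^ (k + 1) / ((k + 1).factorial : ℝ)) := by
    ext y
    rw [← neg_sub, laguerreFun_succ_sub, ← Finset.sum_neg_distrib]
    simp only [mul_neg, mul_div_assoc]
  rw [hfun]
  exact hsum.congr_deriv (by simp only [laguerreFun, mul_div_assoc])

lemma integral_laguerreFun (n : ℕ) (X : ℝ) :
    ∫ t in (0 : ℝ)..X, laguerreFun n t = laguerreFun n X - laguerreFun (n + 1) X := by
  rw [intervalIntegral.integral_eq_sub_of_hasDerivAt
    (fun x _ => hasDerivAt_laguerreFun_sub_succ n x)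
    ((continuous_laguerreFun n).intervalIntegrable 0 X)]
  simp

lemma integral_Sfun (n : ℕ) (X : ℝ) :
    ∫ t in (0 : ℝ)..X, Sfun n t =
      ∑ k ∈ Finset.range (n + 1), (-1 : ℝ) ^ k * (laguerreFun k X - laguerreFun (k + 1) X) := by
  unfold Sfun
  rw [intervalIntegral.integral_finsetSum fun k _ =>
    (continuous_const.fun_mul (continuous_laguerreFun k)).intervalIntegrable 0 X]
  simp only [intervalIntegral.integral_const_mul, integral_laguerreFun]

lemma Tfun_eq_half_add_sum (n : ℕ) (X : ℝ) :
    Tfun n X = 1 / 2 + 1 / 2 *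
      ∑ k ∈ Finset.range n, (-1 : ℝ) ^ k * (laguerreFun k X - laguerreFun (k + 1) X) := by
  induction n with
  | zero => simp [Tfun]
  | succ n ih =>
    rw [Finset.sum_range_succ, mul_add, ← add_assoc, ← ih, Tfun, Tfun, Finset.sum_range_succ]
    ring

theorem T_eq_half_add_integral (n : ℕ) (hn : 1 ≤ n) (X : ℝ) :
    Tfun n X = 1 / 2 + (1 / 2) * ∫ t in (0 : ℝ)..X, Sfun (n - 1) t := by
  obtain ⟨m, rfl⟩ := Nat.exists_eq_add_of_le' hn
  rw [Nat.add_sub_cancel, integral_Sfun, Tfun_eq_half_add_sum]
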